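/- arXiv:1902.06480 — 2 statements merged into one kernel-verified Lean document; each statement's English description precedes it below -/
import Mathlib

section
/- Suppose K̂ : ℝ → ℂ is continuous, satisfies K̂(ω) → 0 as |ω| → ∞, and is bounded. Then for each fixed real Ω, Σ_{m∈ℤ} (1/Δt) K̂(Ω - 2mπ/Δt) φ̂_Δt(Ω - 2mπ/Δt) → K̂(Ω) as Δt → 0⁺. -/
/-!
Since `1 - cos x = 2 sin² (x / 2)`, the kernel is `φ̂_Δt(ω) / Δt = sinc² (ω Δt / 2)`, so the `m`-th
term of the series is `K(Ω - 2mπ/Δt) sinc² (Ω Δt / 2 - m π)`. Once `|Ω| Δt ≤ π`, the argument of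
`sinc` has modulus at least `|m|`, so the terms are dominated by `B · 2 / (1 + m²)` uniformly in
`Δt`. Termwise, the `m = 0` term tends to `K(Ω)` and every other term tends to `0` because its
sampling point escapes to infinity, where `K` decays. Tannery's theorem (dominated convergence for
series) concludes.
-/

open Filter

/-- The Fourier transform of the hat function (real argument), with `φ̂_Δt(0) = Δt`. -/
noncomputable def phiHatR (Δt Ω : ℝ) : ℝ :=
  if Ω = 0 then Δt else 2 / (Ω ^ 2 * Δt) * (1 - Real.cos (Ω * Δt))

open Real Topology

lemma phiHatR_eq_mul_sinc_sq {Δt : ℝ} (hΔt : Δt ≠ 0) (ω : ℝ) :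
    phiHatR Δt ω = Δt * sinc (ω * Δt / 2) ^ 2 := by
  rcases eq_or_ne ω 0 with rfl | hω
  · simp [phiHatR]
  have hx : ω * Δt / 2 ≠ 0 := by positivity
  rw [phiHatR, if_neg hω, sinc_of_ne_zero hx, div_pow, sin_sq_eq_half_sub]
  field_simp

lemma smul_mul_phiHatR {Δt : ℝ} (hΔt : Δt ≠ 0) (z : ℂ) (ω : ℝ) :
    (1 / Δt : ℝ) • (z * (phiHatR Δt ω : ℂ)) = z * (sinc (ω * Δt / 2) ^ 2 : ℝ) := by
  rw [phiHatR_eq_mul_sinc_sq hΔt, Complex.real_smul]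
  have : (Δt : ℂ) ≠ 0 := by exact_mod_cast hΔt
  push_cast
  field_simp

lemma sinc_sq_le_two_div_one_add_sq (y : ℝ) : sinc y ^ 2 ≤ 2 / (1 + y ^ 2) := by
  rw [le_div_iff₀ (by positivity)]
  rcases le_or_gt (y ^ 2) 1 with hy | hy
  · nlinarith [(sq_le_one_iff_abs_le_one _).2 (abs_sinc_le_one y), sq_nonneg (sinc y)]
  · have hy0 : y ≠ 0 := by rintro rfl; norm_num at hy
    rw [sinc_of_ne_zero hy0, div_pow]
    have : sin y ^ 2 / y ^ 2 * y ^ 2 = sin y ^ 2 := div_mul_cancel₀ _ (by positivity)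
    nlinarith [sin_sq_le_one y, div_nonneg (sq_nonneg (sin y)) (sq_nonneg y)]

lemma abs_int_le_abs_sub_int_mul_pi {y : ℝ} (hy : |y| ≤ π / 2) (m : ℤ) :
    |(m : ℝ)| ≤ |y - m * π| := by
  rcases eq_or_ne m 0 with rfl | hm
  · simp
  have hm1 : (1 : ℝ) ≤ |(m : ℝ)| := by exact_mod_cast Int.one_le_abs hm
  have := abs_sub_abs_le_abs_sub (m * π) y
  rw [abs_sub_comm, abs_mul, abs_of_pos pi_pos] at this
  nlinarith [pi_gt_three]

lemma sinc_sub_int_mul_pi_sq_le {y : ℝ} (hy : |y| ≤ π / 2) (m : ℤ) :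
    sinc (y - m * π) ^ 2 ≤ 2 / (1 + (m : ℝ) ^ 2) := by
  refine (sinc_sq_le_two_div_one_add_sq _).trans ?_
  gcongr 2 / (1 + ?_)
  exact sq_le_sq.2 (abs_int_le_abs_sub_int_mul_pi hy m)

lemma summable_two_div_one_add_sq : Summable fun m : ℤ => 2 / (1 + (m : ℝ) ^ 2) := by
  refine ((summable_one_div_int_pow.2 one_lt_two).mul_left 2).of_norm_bounded_eventually ?_
  filter_upwards [(Set.finite_singleton (0 : ℤ)).compl_mem_cofinite] with m hm
  have hm : (m : ℝ) ≠ 0 := by exact_mod_cast hm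
  rw [Real.norm_of_nonneg (by positivity), mul_one_div]
  gcongr
  linarith

lemma tendsto_sub_div_nhdsGT_zero_cocompact {c : ℝ} (hc : c ≠ 0) (Ω : ℝ) :
    Tendsto (fun t => Ω - c / t) (𝓝[>] 0) (cocompact ℝ) := by
  refine tendsto_cocompact_of_tendsto_dist_comp_atTop Ω ?_
  refine (tendsto_inv_nhdsGT_zero.const_mul_atTop (abs_pos.2 hc)).congr' ?_
  filter_upwards [self_mem_nhdsWithin] with t (ht : 0 < t)
  rw [dist_eq_norm, sub_sub_cancel_left, norm_neg, norm_div, Real.norm_eq_abs, Real.norm_eq_abs,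
    abs_of_pos ht, div_eq_mul_inv]

section aliasTerm

/-- The `m`-th term of the discretised series, after `φ̂_Δt(ω) / Δt = sinc² (ω Δt / 2)`. -/
noncomputable def aliasTerm (K : ℝ → ℂ) (Ω Δt : ℝ) (m : ℤ) : ℂ :=
  K (Ω - 2 * m * π / Δt) * (sinc (Ω * Δt / 2 - m * π) ^ 2 : ℝ)

variable {K : ℝ → ℂ} {Ω : ℝ}

lemma smul_mul_phiHatR_eq_aliasTerm {Δt : ℝ} (hΔt : Δt ≠ 0) (m : ℤ) :
    (1 / Δt : ℝ) • (K (Ω - 2 * m * π / Δt) * (phiHatR Δt (Ω - 2 * m * π / Δt) : ℂ)) =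
      aliasTerm K Ω Δt m := by
  rw [smul_mul_phiHatR hΔt, aliasTerm]
  congr 4
  field_simp

lemma norm_aliasTerm_le {B Δt : ℝ} (hB : ∀ ω, ‖K ω‖ ≤ B) (hΔt : |Ω * Δt / 2| ≤ π / 2) (m : ℤ) :
    ‖aliasTerm K Ω Δt m‖ ≤ B * (2 / (1 + (m : ℝ) ^ 2)) := by
  rw [aliasTerm, norm_mul, Complex.norm_real, Real.norm_of_nonneg (sq_nonneg _)]
  exact mul_le_mul (hB _) (sinc_sub_int_mul_pi_sq_le hΔt m) (sq_nonneg _)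
    ((norm_nonneg _).trans (hB Ω))

lemma tendsto_aliasTerm_zero : Tendsto (aliasTerm K Ω · 0) (𝓝[>] 0) (𝓝 (K Ω)) := by
  have hsinc : Continuous fun Δt => sinc (Ω * Δt / 2) ^ 2 := by fun_prop
  simpa [aliasTerm] using ((hsinc.tendsto 0).mono_left nhdsWithin_le_nhds).ofReal.const_mul (K Ω)

lemma tendsto_aliasTerm_of_ne_zero (hdecay : Tendsto K (cocompact ℝ) (𝓝 0)) {m : ℤ}
    (hm : m ≠ 0) : Tendsto (aliasTerm K Ω · m) (𝓝[>] 0) (𝓝 0) := by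
  have hc : 2 * (m : ℝ) * π ≠ 0 :=
    mul_ne_zero (mul_ne_zero two_ne_zero (Int.cast_ne_zero.2 hm)) pi_ne_zero
  have hK := (hdecay.comp (tendsto_sub_div_nhdsGT_zero_cocompact hc Ω)).norm
  rw [norm_zero] at hK
  refine squeeze_zero_norm (fun Δt => ?_) hK
  rw [aliasTerm, norm_mul, Complex.norm_real, Real.norm_of_nonneg (sq_nonneg _)]
  exact mul_le_of_le_one_right (norm_nonneg _) ((sq_le_one_iff_abs_le_one _).2 (abs_sinc_le_one _))

end aliasTerm

theorem discretised_fourier_tendsto_kernel_general (K : ℝ → ℂ)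
    (hdecay : Tendsto K (cocompact ℝ) (nhds 0)) (hbdd : ∃ B : ℝ, ∀ ω : ℝ, ‖K ω‖ ≤ B)
    (Ω : ℝ) :
    Tendsto (fun Δt : ℝ =>
        ∑' m : ℤ, (1 / Δt : ℝ) • (K (Ω - 2 * m * Real.pi / Δt)
          * (phiHatR Δt (Ω - 2 * m * Real.pi / Δt) : ℂ)))
      (nhdsWithin 0 (Set.Ioi 0)) (nhds (K Ω)) := by
  obtain ⟨B, hB⟩ := hbdd
  have hterm (m : ℤ) :
      Tendsto (aliasTerm K Ω · m) (𝓝[>] 0) (𝓝 (if m = 0 then K Ω else 0)) := by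
    rcases eq_or_ne m 0 with rfl | hm
    · simpa using tendsto_aliasTerm_zero
    · simpa [hm] using tendsto_aliasTerm_of_ne_zero hdecay hm
  have hsmall : ∀ᶠ Δt in 𝓝[>] (0 : ℝ), |Ω * Δt / 2| ≤ π / 2 := by
    have : Continuous fun Δt => |Ω * Δt / 2| := by fun_prop
    exact ((this.tendsto 0).mono_left nhdsWithin_le_nhds).eventually
      (ge_mem_nhds (by simpa using half_pos pi_pos))
  have hlim := tendsto_tsum_of_dominated_convergence (summable_two_div_one_add_sq.mul_left B)
    hterm (hsmall.mono fun _ hΔt => norm_aliasTerm_le hB hΔt)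
  rw [tsum_ite_eq] at hlim
  refine hlim.congr' ?_
  filter_upwards [self_mem_nhdsWithin] with Δt (hΔt : 0 < Δt)
  exact tsum_congr fun m => (smul_mul_phiHatR_eq_aliasTerm hΔt.ne' m).symm

/-- If `K̂ : ℝ → ℂ` is continuous, bounded, and tends to `0` at infinity, then for each fixed
real `Ω`, `Σ_{m∈ℤ} (1/Δt) K̂(Ω - 2mπ/Δt) φ̂_Δt(Ω - 2mπ/Δt) → K̂(Ω)` as `Δt → 0⁺`. -/
theorem discretised_fourier_tendsto_kernel (K : ℝ → ℂ) (hcont : Continuous K)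
    (hdecay : Tendsto K (cocompact ℝ) (nhds 0)) (hbdd : ∃ B : ℝ, ∀ ω : ℝ, ‖K ω‖ ≤ B)
    (Ω : ℝ) :
    Tendsto (fun Δt : ℝ =>
        ∑' m : ℤ, (1 / Δt : ℝ) • (K (Ω - 2 * m * Real.pi / Δt)
          * (phiHatR Δt (Ω - 2 * m * Real.pi / Δt) : ℂ)))
      (nhdsWithin 0 (Set.Ioi 0)) (nhds (K Ω)) :=
  discretised_fourier_tendsto_kernel_general K hdecay hbdd Ω
end

section
/- For every Δt > 0 and every real Ω, the hat-function Fourier transform satisfies the partition identity Σ_{m∈ℤ} (1/Δt) φ̂_Δt(Ω - 2mπ/Δt) = 1. -/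
open Real FourierTransform MeasureTheory Asymptotics Filter

lemma phiHatR_nonneg {Δt : ℝ} (hΔt : 0 ≤ Δt) (Ω : ℝ) : 0 ≤ phiHatR Δt Ω := by
  unfold phiHatR
  split_ifs
  · exact hΔt
  · have := cos_le_one (Ω * Δt)
    exact mul_nonneg (by positivity) (by linarith)

lemma phiHatR_eq_mul_phiHatR_one {Δt : ℝ} (hΔt : Δt ≠ 0) (Ω : ℝ) :
    phiHatR Δt Ω = Δt * phiHatR 1 (Ω * Δt) := by
  by_cases hΩ : Ω = 0
  · simp [phiHatR, hΩ]
  · simp only [phiHatR, hΩ, hΔt, mul_eq_zero, or_self, if_false, mul_one]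
    field_simp

lemma phiHatR_one_le (Ω : ℝ) : phiHatR 1 Ω ≤ 8 / (4 + Ω ^ 2) := by
  by_cases hΩ : Ω = 0
  · simp only [phiHatR, hΩ, if_true]
    norm_num
  · simp only [phiHatR, hΩ, if_false, mul_one]
    rw [div_mul_eq_mul_div, div_le_div_iff₀ (by positivity) (by positivity)]
    have hcos₁ := one_sub_sq_div_two_le_cos (x := Ω)
    have hcos₂ := neg_one_le_cos Ω
    nlinarith [sq_nonneg Ω]

lemma phiHatR_one_eq_integral_cos (a : ℝ) :
    phiHatR 1 a = ∫ v in (0 : ℝ)..1, 2 * cos (a * v) * (1 - v) := by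
  by_cases ha : a = 0
  · norm_num [phiHatR, ha, intervalIntegral.integral_sub intervalIntegrable_const
      intervalIntegral.intervalIntegrable_id]
  have hprimitive (v : ℝ) :
      HasDerivAt (fun v => 2 * ((1 - v) * sin (a * v) / a - cos (a * v) / a ^ 2))
        (2 * cos (a * v) * (1 - v)) v := by
    have hlin : HasDerivAt (fun v => a * v) a v := by simpa using (hasDerivAt_id' v).const_mul a
    refine (((((hasDerivAt_id' v).const_sub 1).mul hlin.sin).div_const a).sub
      (hlin.cos.div_const (a ^ 2))).const_mul 2 |>.congr_deriv ?_
    field_simp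
    ring
  rw [intervalIntegral.integral_eq_sub_of_hasDerivAt (fun v _ => hprimitive v)
    (by apply Continuous.intervalIntegrable; fun_prop)]
  simp only [phiHatR, ha, if_false, mul_zero, mul_one, sin_zero, cos_zero]
  field_simp
  ring

-- Complex-valued because Mathlib's Poisson summation formula is stated for functions `ℝ → ℂ`.
noncomputable def hat (t : ℝ) : ℂ := ((max 0 (1 - |t|) : ℝ) : ℂ)

lemma hat_neg (t : ℝ) : hat (-t) = hat t := by
  simp only [hat, abs_neg]

lemma hat_of_mem_Icc {t : ℝ} (ht : t ∈ Set.Icc (0 : ℝ) 1) : hat t = ((1 - t : ℝ) : ℂ) := by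
  rw [hat, abs_of_nonneg ht.1, max_eq_right (by linarith [ht.2])]

lemma hat_eq_zero {t : ℝ} (ht : 1 ≤ |t|) : hat t = 0 := by
  rw [hat, max_eq_left (by linarith), Complex.ofReal_zero]

lemma hat_eq_zero_of_notMem_Icc {t : ℝ} (ht : t ∉ Set.Icc (-1 : ℝ) 1) : hat t = 0 :=
  hat_eq_zero (not_le.mp (abs_le.not.mpr ht)).le

lemma continuous_hat : Continuous hat := by
  unfold hat
  fun_prop

lemma hasCompactSupport_hat : HasCompactSupport hat :=
  HasCompactSupport.intro isCompact_Icc fun _ => hat_eq_zero_of_notMem_Icc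

lemma integrable_hat : Integrable hat :=
  continuous_hat.integrable_of_hasCompactSupport hasCompactSupport_hat

lemma fourier_hat (ξ : ℝ) : 𝓕 hat ξ = phiHatR 1 (2 * π * ξ) := by
  set g : ℝ → ℂ := fun v => Complex.exp (↑(-2 * π * v * ξ) * Complex.I) • hat v
  have hg : Continuous g := by
    have := continuous_hat
    fun_prop
  have hsupp : ∀ v ∉ Set.Icc (-1 : ℝ) 1, g v = 0 := fun v hv => by
    simp only [g, hat_eq_zero_of_notMem_Icc hv, smul_zero]
  have hpair : ∀ v ∈ Set.uIcc (0 : ℝ) 1,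
      g v + g (-v) = ((2 * cos (2 * π * ξ * v) * (1 - v) : ℝ) : ℂ) := fun v hv => by
    rw [Set.uIcc_of_le zero_le_one] at hv
    simp only [g, hat_neg, hat_of_mem_Icc hv, smul_eq_mul, Complex.ofReal_mul, Complex.ofReal_cos,
      Complex.cos]
    push_cast
    ring_nf
  calc 𝓕 hat ξ = ∫ v in (-1 : ℝ)..1, g v := by
        rw [Real.fourier_real_eq_integral_exp_smul,
          ← setIntegral_eq_integral_of_forall_compl_eq_zero hsupp, integral_Icc_eq_integral_Ioc,
          ← intervalIntegral.integral_of_le (by norm_num)]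
    _ = ∫ v in (0 : ℝ)..1, (g v + g (-v)) := by
        rw [intervalIntegral.integral_add (hg.intervalIntegrable _ _)
            ((by fun_prop : Continuous fun v => g (-v)).intervalIntegrable _ _),
          intervalIntegral.integral_comp_neg, neg_zero, add_comm,
          intervalIntegral.integral_add_adjacent_intervals (hg.intervalIntegrable _ _)
            (hg.intervalIntegrable _ _)]
    _ = _ := by
        rw [intervalIntegral.integral_congr hpair, intervalIntegral.integral_ofReal,
          phiHatR_one_eq_integral_cos]

lemma norm_fourier_hat_le (ξ : ℝ) : ‖𝓕 hat ξ‖ ≤ 2 / (1 + ξ ^ 2) := by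
  rw [fourier_hat, Complex.norm_real, Real.norm_of_nonneg (phiHatR_nonneg zero_le_one _)]
  refine (phiHatR_one_le _).trans ?_
  rw [div_le_div_iff₀ (by positivity) (by positivity)]
  have hπ : 1 ≤ π ^ 2 := by nlinarith [pi_gt_three]
  nlinarith [mul_le_mul_of_nonneg_right hπ (sq_nonneg ξ)]

lemma continuous_fourier_hat : Continuous (𝓕 hat) :=
  VectorFourier.fourierIntegral_continuous continuous_fourierChar continuous_inner integrable_hat

lemma integrable_fourier_hat : Integrable (𝓕 hat) :=
  (integrable_inv_one_add_sq.const_mul 2).mono' continuous_fourier_hat.aestronglyMeasurable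
    (Eventually.of_forall fun ξ => (norm_fourier_hat_le ξ).trans_eq (div_eq_mul_inv _ _))

lemma fourier_fourier_hat : 𝓕 (𝓕 hat) = hat := by
  ext x
  rw [← hat_neg, ← integrable_hat.fourierInv_fourier_eq integrable_fourier_hat
    continuous_hat.continuousAt, fourierInv_eq_fourier_neg, neg_neg]

lemma isBigO_cocompact_rpow_neg_two {f : ℝ → ℂ} {C : ℝ}
    (hf : ∀ x, 1 ≤ |x| → ‖f x‖ ≤ C / x ^ 2) : f =O[cocompact ℝ] (|·| ^ (-2 : ℝ)) := by
  refine IsBigO.of_bound C ?_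
  filter_upwards [tendsto_norm_cocompact_atTop.eventually_ge_atTop 1] with x hx
  rw [Real.norm_of_nonneg (by positivity), rpow_neg (abs_nonneg x), rpow_two, sq_abs,
    ← div_eq_mul_inv]
  exact hf x hx

lemma tsum_phiHatR_one (x : ℝ) : ∑' n : ℤ, phiHatR 1 (2 * π * (x + n)) = 1 := by
  have hdecay : 𝓕 hat =O[cocompact ℝ] (|·| ^ (-2 : ℝ)) :=
    isBigO_cocompact_rpow_neg_two fun x hx => (norm_fourier_hat_le x).trans
      (div_le_div_of_nonneg_left zero_le_two (by nlinarith [sq_abs x]) (by linarith))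
  have hdecay₂ : 𝓕 (𝓕 hat) =O[cocompact ℝ] (|·| ^ (-2 : ℝ)) := by
    refine isBigO_cocompact_rpow_neg_two (C := 0) fun x hx => ?_
    rw [fourier_fourier_hat, hat_eq_zero hx, norm_zero, zero_div]
  have hpoisson := Real.tsum_eq_tsum_fourier_of_rpow_decay continuous_fourier_hat one_lt_two
    hdecay hdecay₂ x
  have hhat : ∑' n : ℤ, hat n * fourier n (x : UnitAddCircle) = 1 := by
    rw [tsum_eq_single 0 fun n hn => by
      rw [hat_eq_zero (by exact_mod_cast Int.one_le_abs hn), zero_mul]]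
    simp [hat]
  simp only [fourier_hat, fourier_fourier_hat, ← Complex.ofReal_tsum, hhat] at hpoisson
  exact_mod_cast hpoisson

/-- Partition of unity: `Σ_{m∈ℤ} (1/Δt) φ̂_Δt(Ω - 2mπ/Δt) = 1` for every `Δt > 0` and real
`Ω`. -/
theorem phiHat_partition_of_unity (Δt : ℝ) (hΔt : 0 < Δt) (Ω : ℝ) :
    ∑' m : ℤ, (1 / Δt) * phiHatR Δt (Ω - 2 * m * Real.pi / Δt) = 1 := by
  set x := Ω * Δt / (2 * π)
  have hterm (m : ℤ) :
      (1 / Δt) * phiHatR Δt (Ω - 2 * m * π / Δt) = phiHatR 1 (2 * π * (x + ↑(-m))) := by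
    rw [phiHatR_eq_mul_phiHatR_one hΔt.ne', one_div, inv_mul_cancel_left₀ hΔt.ne']
    congr 1
    simp only [x, Int.cast_neg]
    field_simp
    ring
  rw [tsum_congr hterm]
  exact ((Equiv.neg ℤ).tsum_eq fun n : ℤ => phiHatR 1 (2 * π * (x + n))).trans
    (tsum_phiHatR_one x)
end
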